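/- Let G be an N×N matrix, n ≠ m, and let Δ'_nm be the (N-1)×(N-1) matrix obtained from -G by deleting row n and column n and then replacing the m-th column by the negative of the n-th column of -G (equivalently, Δ'_nm(0) from the Cramer construction). Then det Δ'_nm = Σ_{F ∈ F_{{†,n}}(m·n)} π_F, where F_{{†,n}}(m·n) is the set of spanning forests of G† with exactly two trees, rooted at † and n, that contain a directed path from m to n. -/

import Mathlib

open scoped Classical
open Finset

noncomputable section

/-- The step relation of an out-neighbor map: there is an arc from `a` to `b`. -/
def FStep {V : Type*} (f : V → Option V) (a b : V) : Prop := f a = some b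

/-- A forest: a digraph in which every vertex has out-degree ≤ 1 (encoded by the
out-neighbor map `f`) and which has no directed circuits. -/
def IsForest {V : Type*} (f : V → Option V) : Prop :=
  ∀ v, ¬ Relation.TransGen (FStep f) v v

/-- The roots of a forest: vertices of out-degree 0.  For a forest, the number of
trees (connected components) equals the number of roots. -/
def roots {V : Type*} [Fintype V] (f : V → Option V) : Finset V :=
  Finset.univ.filter (fun v => f v = none)

/-- `Reach f a b`: the directed path out of `a` (following arcs) passes through `b`. -/
def Reach {V : Type*} (f : V → Option V) (a b : V) : Prop :=
  Relation.ReflTransGen (FStep f) a b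

/-- The productivity π_F of a forest: product of the weights of its arcs. -/
def forestProd {V K : Type*} [Fintype V] [CommRing K] (w : V → V → K)
    (f : V → Option V) : K :=
  ∏ v, (match f v with | some u => w v u | none => 1)

/-- Arc weights of the augmented digraph G† on vertex set `Option (Fin N)`,
where `none` plays the role of the extra vertex †: arcs (i,j), i ≠ j, have
weight g_ij, arcs (i,†) have weight -Σ_j g_ij; there are no loops and no
arcs out of †. -/
def daggerWeight {N : ℕ} {K : Type*} [CommRing K] (G : Matrix (Fin N) (Fin N) K) :
    Option (Fin N) → Option (Fin N) → K
  | some i, some j => if i = j then 0 else G i j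
  | some i, none => -(∑ j, G i j)
  | none, _ => 0

/-!
Row `i` of Δ'_nm equals `∑ₖ g†_{ik} • choiceRow i k`, the sum running over the out-neighbours
`k` of `i` in G†. Expanding the determinant multilinearly in its rows gives a sum over all
choices `r` of one out-arc per vertex `i ≠ n`, i.e. over all functional digraphs on G† with roots
`†` and `n`, of `π_r` times the determinant of the rows `choiceRow i (r i)`. That matrix is
`1 - P`, with `P` the adjacency matrix of `r` on the vertices `≠ n`, whose column `m` is replaced
by the indicator of the arcs into `n`. If `r` has a cycle, the cycle's indicator is a left null
vector and the determinant vanishes. Otherwise `P` is acyclic, so `det (1 - P) = 1`, and Cramer's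
rule shows that the determinant is `1` or `0` according as the path from `m` ends at `n` or at
`†`.
-/

open Matrix Function

lemma Fintype.sum_ite_mem_eq_finsum_mem {α β M : Type*} [Fintype α] [AddCommMonoid M]
    {e : α → β} (he : Injective e) {S : Set β} (hS : S ⊆ Set.range e) (φ : β → M) :
    ∑ a, (if e a ∈ S then φ (e a) else 0) = ∑ᶠ b ∈ S, φ b := by
  have hbij : Set.BijOn e (e ⁻¹' S) S := ⟨fun _ ha => ha, he.injOn, fun b hb => by
    obtain ⟨a, rfl⟩ := hS hb
    exact ⟨a, hb, rfl⟩⟩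
  rw [← finsum_mem_eq_of_bijOn e hbij fun _ _ => rfl, finsum_mem_def, finsum_eq_sum_of_fintype]
  rfl

namespace Matrix

variable {ι R : Type*} [Fintype ι] [DecidableEq ι] [CommRing R]

lemma det_of_sum_mul {κ : Type*} [Fintype κ] (w : ι → κ → R) (u : ι → κ → ι → R) :
    (of fun i j => ∑ k, w i k * u i k j).det =
      ∑ r : ι → κ, (∏ i, w i (r i)) * (of fun i j => u i (r i) j).det := by
  have hrows := (detRowAlternating (R := R) (n := ι)).toMultilinearMap.map_sum
    fun i k => w i k • u i k
  simp only [AlternatingMap.coe_multilinearMap] at hrows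
  convert hrows using 1
  · congr 1
    ext i j
    simp [Finset.sum_apply]
  · refine Finset.sum_congr rfl fun r _ => ?_
    rw [← det_mul_column]
    rfl

lemma det_updateCol_mulVec (A : Matrix ι ι R) (j : ι) (x : ι → R) :
    (A.updateCol j (A *ᵥ x)).det = A.det * x j := by
  rw [← cramer_apply, cramer_eq_adjugate_mulVec, mulVec_mulVec, adjugate_mul, smul_mulVec,
    one_mulVec, Pi.smul_apply, smul_eq_mul]

lemma det_updateCol_eq_zero_of_vecMul_eq_zero [IsDomain R] {A : Matrix ι ι R}
    {v c : ι → R} (hv : v ≠ 0) (hA : v ᵥ* A = 0) (hc : v ⬝ᵥ c = 0) (j : ι) :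
    (A.updateCol j c).det = 0 := by
  refine exists_vecMul_eq_zero_iff.mp ⟨v, hv, funext fun k => ?_⟩
  by_cases hk : k = j
  · simpa [vecMul, dotProduct, updateCol_apply, hk] using hc
  · simpa [vecMul, dotProduct, updateCol_apply, hk] using congrFun hA k

end Matrix

section FunctionalDigraph

variable {V : Type*} {f : V → Option V}

def advance (f : V → Option V) (v : V) : V := (f v).getD v

lemma advance_eq_of_fStep {a b : V} (h : FStep f a b) : advance f a = b := by
  simp [advance, show f a = some b from h]

lemma reach_iff_of_eq_none {v z : V} (hv : f v = none) : Reach f v z ↔ z = v := by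
  unfold Reach
  rw [Relation.ReflTransGen.cases_head_iff]
  simp [FStep, hv, eq_comm]

lemma reach_iff_of_fStep {v w z : V} (hvw : FStep f v w) (hvz : v ≠ z) :
    Reach f v z ↔ Reach f w z := by
  unfold Reach
  rw [Relation.ReflTransGen.cases_head_iff]
  simp [FStep, show f v = some w from hvw, hvz]

lemma IsForest.exists_mem_forall_not_fStep [Finite V] (hf : IsForest f) {s : Set V}
    (hs : s.Nonempty) : ∃ a ∈ s, ∀ b ∈ s, ¬ FStep f a b := by
  let r : V → V → Prop := flip (Relation.TransGen (FStep f))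
  have : IsTrans V r := ⟨fun _ _ _ hab hbc => hbc.trans hab⟩
  have : Std.Irrefl r := ⟨hf⟩
  obtain ⟨a, ha, hmin⟩ := (Finite.wellFounded_of_trans_of_irrefl r).has_min s hs
  exact ⟨a, ha, fun b hb hab => hmin b hb (.single hab)⟩

lemma Relation.TransGen.exists_advance_iterate {a b : V}
    (h : Relation.TransGen (FStep f) a b) :
    ∃ n, (advance f)^[n + 1] a = b ∧
      ∀ k ≤ n, FStep f ((advance f)^[k] a) ((advance f)^[k + 1] a) := by
  induction h with
  | single hab => exact ⟨0, advance_eq_of_fStep hab, by simpa [advance_eq_of_fStep hab]⟩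
  | tail _ hbc ih =>
    obtain ⟨n, hn, hsteps⟩ := ih
    refine ⟨n + 1, ?_, fun k hk => ?_⟩
    · rw [iterate_succ_apply', hn, advance_eq_of_fStep hbc]
    · rcases Nat.lt_or_eq_of_le hk with hk | rfl
      · exact hsteps k (by omega)
      · rwa [iterate_succ_apply' _ (n + 1), hn, advance_eq_of_fStep hbc]

lemma exists_periodic_orbit_of_not_isForest (hf : ¬ IsForest f) :
    ∃ x p, 0 < p ∧ IsPeriodicPt (advance f) p x ∧
      ∀ k, FStep f ((advance f)^[k] x) ((advance f)^[k + 1] x) := by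
  obtain ⟨x, hx⟩ := not_forall_not.mp hf
  obtain ⟨n, hn, hsteps⟩ := hx.exists_advance_iterate
  have hper : IsPeriodicPt (advance f) (n + 1) x := hn
  refine ⟨x, n + 1, n.succ_pos, hper, fun k => ?_⟩
  have h := hsteps (k % (n + 1)) (Nat.lt_succ_iff.mp (Nat.mod_lt _ n.succ_pos))
  rwa [iterate_succ_apply', hper.iterate_mod_apply, ← iterate_succ_apply' (advance f)] at h

end FunctionalDigraph

section ArcMatrix

variable {V R : Type*} [DecidableEq V] [CommRing R] {f : V → Option V}

def arcMatrix (R : Type*) [CommRing R] (f : V → Option V) : Matrix V V R :=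
  of fun v w => if f v = some w then 1 else 0

lemma arcMatrix_mulVec [Fintype V] (x : V → R) (v : V) :
    (arcMatrix R f *ᵥ x) v = (f v).elim 0 x := by
  cases h : f v <;> simp [arcMatrix, mulVec, dotProduct, h]

lemma row_one_sub_arcMatrix_of_fStep {a b : V} (h : FStep f a b) :
    (1 - arcMatrix R f).row a = Pi.single a 1 - Pi.single b 1 := by
  ext v
  simp [arcMatrix, one_apply, Pi.single_apply, show f a = some b from h, eq_comm]

lemma det_one_sub_arcMatrix [Fintype V] (hf : IsForest f) : (1 - arcMatrix R f).det = 1 := by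
  rw [det_apply', Finset.sum_eq_single 1 (fun σ _ hσ => ?_) (by simp)]
  · have hloop : ∀ v, f v ≠ some v := fun v h => hf v (.single h)
    simp [arcMatrix, hloop]
  · obtain ⟨a, ha, hmin⟩ := hf.exists_mem_forall_not_fStep (s := {v | σ v ≠ v})
      (not_forall.mp fun h => hσ (Equiv.ext h))
    have hne : σ.symm a ≠ a := fun h => ha (σ.symm_apply_eq.mp h).symm
    have hno : f a ≠ some (σ.symm a) := hmin _ (by simpa using hne.symm)
    refine mul_eq_zero_of_right _ (Finset.prod_eq_zero (Finset.mem_univ (σ.symm a)) ?_)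
    rw [Equiv.apply_symm_apply, Matrix.sub_apply, one_apply_ne hne.symm, arcMatrix, of_apply,
      if_neg hno, sub_zero]

lemma one_sub_arcMatrix_mulVec_reach [Fintype V] {q : V → Prop} [DecidablePred q]
    (hq : ∀ v, q v → f v = none) :
    (1 - arcMatrix R f) *ᵥ (fun v => if ∃ z, Reach f v z ∧ q z then 1 else 0) =
      fun v => if q v then 1 else 0 := by
  ext v
  rw [sub_mulVec, one_mulVec, Pi.sub_apply, arcMatrix_mulVec]
  rcases hv : f v with _ | w
  · simp [reach_iff_of_eq_none hv]
  · have hnq : ¬ q v := fun h => by simp [hq v h] at hv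
    have hreach : (∃ z, Reach f v z ∧ q z) ↔ ∃ z, Reach f w z ∧ q z :=
      exists_congr fun z => and_congr_left fun hz =>
        reach_iff_of_fStep hv (by rintro rfl; exact hnq hz)
    simp [hreach, hnq]

lemma det_updateCol_one_sub_arcMatrix_of_isForest [Fintype V] (hf : IsForest f)
    {q : V → Prop} [DecidablePred q] (hq : ∀ v, q v → f v = none) (j : V) :
    ((1 - arcMatrix R f).updateCol j (fun v => if q v then 1 else 0)).det =
      if ∃ z, Reach f j z ∧ q z then 1 else 0 := by
  rw [← one_sub_arcMatrix_mulVec_reach hq, det_updateCol_mulVec, det_one_sub_arcMatrix hf,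
    one_mul]

lemma det_updateCol_one_sub_arcMatrix_of_not_isForest [Fintype V] [IsDomain R]
    (hf : ¬ IsForest f) {c : V → R} (hc : ∀ v, f v ≠ none → c v = 0) (j : V) :
    ((1 - arcMatrix R f).updateCol j c).det = 0 := by
  obtain ⟨x, p, hp, hper, hsteps⟩ := exists_periodic_orbit_of_not_isForest hf
  set g := advance f
  have hP := hper.minimalPeriod_pos hp
  -- over a minimal period the orbit passes through `x` only once, so the vector is nonzero
  refine det_updateCol_eq_zero_of_vecMul_eq_zero
    (v := ∑ k ∈ range (minimalPeriod g x), Pi.single (g^[k] x) 1) ?_ ?_ ?_ j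
  · intro h
    have hx := congrFun h x
    rw [Finset.sum_apply, Finset.sum_eq_single 0 (fun k hk hk0 => Pi.single_eq_of_ne (Ne.symm <|
      not_isPeriodicPt_of_pos_of_lt_minimalPeriod hk0 (Finset.mem_range.mp hk)) _)
      (by simp [hP])] at hx
    simp at hx
  · simp_rw [sum_vecMul, single_one_vecMul, row_one_sub_arcMatrix_of_fStep (hsteps _)]
    rw [Finset.sum_range_sub' (fun k => (Pi.single (g^[k] x) 1 : V → R)), iterate_minimalPeriod,
      iterate_zero_apply, sub_self]
  · simp_rw [sum_dotProduct, single_one_dotProduct]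
    exact Finset.sum_eq_zero fun k _ => hc _ (by simp [show f _ = _ from hsteps k])

lemma det_updateCol_one_sub_arcMatrix [Fintype V] [IsDomain R] {q : V → Prop} [DecidablePred q]
    (hq : ∀ v, q v → f v = none) (j : V) :
    ((1 - arcMatrix R f).updateCol j (fun v => if q v then 1 else 0)).det =
      if IsForest f ∧ ∃ z, Reach f j z ∧ q z then 1 else 0 := by
  by_cases hf : IsForest f
  · simpa only [hf, true_and] using det_updateCol_one_sub_arcMatrix_of_isForest hf hq j
  · rw [det_updateCol_one_sub_arcMatrix_of_not_isForest hf (fun v hv => if_neg (mt (hq v) hv)),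
      if_neg fun h => hf h.1]

end ArcMatrix

structure ExtendsByRoots {ι V : Type*} (e : ι → V) (f : ι → Option ι) (F : V → Option V) :
    Prop where
  fStep_iff : ∀ a b, FStep F (e a) (e b) ↔ FStep f a b
  eq_none : ∀ v ∉ Set.range e, F v = none

namespace ExtendsByRoots

variable {ι V : Type*} {e : ι → V} {f : ι → Option ι} {F : V → Option V}

lemma mem_range_of_fStep (h : ExtendsByRoots e f F) {v w : V} (hvw : FStep F v w) :
    v ∈ Set.range e := by
  by_contra hv
  simp [FStep, h.eq_none v hv] at hvw

lemma transGen_iff (h : ExtendsByRoots e f F) {a b : ι} :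
    Relation.TransGen (FStep F) (e a) (e b) ↔ Relation.TransGen (FStep f) a b := by
  refine ⟨fun hab => ?_, fun hab => hab.lift e fun a b => (h.fStep_iff a b).mpr⟩
  suffices ∀ w, Relation.TransGen (FStep F) (e a) w → ∀ b, w = e b →
      Relation.TransGen (FStep f) a b from this _ hab b rfl
  intro w hw
  induction hw with
  | single hstep =>
    rintro b rfl
    exact .single ((h.fStep_iff a b).mp hstep)
  | tail _ hstep ih =>
    rintro b rfl
    obtain ⟨c, rfl⟩ := h.mem_range_of_fStep hstep
    exact (ih c rfl).tail ((h.fStep_iff c b).mp hstep)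

lemma isForest_iff (h : ExtendsByRoots e f F) : IsForest F ↔ IsForest f := by
  refine ⟨fun hF a ha => hF (e a) (h.transGen_iff.mpr ha), fun hf v hv => ?_⟩
  obtain ⟨w, hvw, -⟩ := Relation.TransGen.head'_iff.mp hv
  obtain ⟨a, rfl⟩ := h.mem_range_of_fStep hvw
  exact hf a (h.transGen_iff.mp hv)

lemma reach_iff (h : ExtendsByRoots e f F) (he : Injective e) {a : ι} {y : V}
    (hy : y ∉ Set.range e) : Reach F (e a) y ↔ ∃ z, Reach f a z ∧ FStep F (e z) y := by
  constructor
  · intro hay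
    obtain ⟨w, haw, hwy⟩ := Relation.TransGen.tail'_iff.mp
      ((Relation.reflTransGen_iff_eq_or_transGen.mp hay).resolve_left fun h => hy ⟨a, h.symm⟩)
    obtain ⟨z, rfl⟩ := h.mem_range_of_fStep hwy
    refine ⟨z, ?_, hwy⟩
    rcases Relation.reflTransGen_iff_eq_or_transGen.mp haw with hza | haz
    · exact he hza ▸ .refl
    · exact (h.transGen_iff.mp haz).to_reflTransGen
  · rintro ⟨z, haz, hzy⟩
    exact (haz.lift e fun a b => (h.fStep_iff a b).mpr).tail hzy

end ExtendsByRoots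

section DaggerGraph

variable {N : ℕ} {n : Fin N}

def daggerSucc (r : {i // i ≠ n} → Option (Fin N)) :
    Option (Fin N) → Option (Option (Fin N))
  | none => none
  | some i => if h : i = n then none else some (r ⟨i, h⟩)

def innerSucc (r : {i // i ≠ n} → Option (Fin N)) : {i // i ≠ n} → Option {i // i ≠ n} :=
  fun i => (r i).bind fun j => if h : j = n then none else some ⟨j, h⟩

@[simp] lemma daggerSucc_none (r : {i // i ≠ n} → Option (Fin N)) : daggerSucc r none = none :=
  rfl

@[simp] lemma daggerSucc_some_self (r : {i // i ≠ n} → Option (Fin N)) :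
    daggerSucc r (some n) = none := by
  simp [daggerSucc]

@[simp] lemma daggerSucc_some_coe (r : {i // i ≠ n} → Option (Fin N)) (i : {i // i ≠ n}) :
    daggerSucc r (some (i : Fin N)) = some (r i) := by
  simp [daggerSucc, i.2]

lemma innerSucc_eq_some_iff (r : {i // i ≠ n} → Option (Fin N)) (i j : {i // i ≠ n}) :
    innerSucc r i = some j ↔ r i = some (j : Fin N) := by
  rcases hr : r i with _ | k
  · simp [innerSucc, hr]
  · by_cases hk : k = n
    · subst hk
      simp [innerSucc, hr, Ne.symm j.2]
    · simp [innerSucc, hr, Ne.symm hk, Subtype.ext_iff, eq_comm]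

lemma extendsByRoots_daggerSucc (r : {i // i ≠ n} → Option (Fin N)) :
    ExtendsByRoots (fun i : {i // i ≠ n} => some (i : Fin N)) (innerSucc r) (daggerSucc r) where
  fStep_iff a b := by simp [FStep, innerSucc_eq_some_iff]
  eq_none v hv := by
    rcases v with _ | i
    · rfl
    · obtain rfl : i = n := by_contra fun hi => hv ⟨⟨i, hi⟩, rfl⟩
      exact daggerSucc_some_self r

lemma daggerSucc_injective : Injective (daggerSucc (N := N) (n := n)) := fun r r' h =>
  funext fun i => Option.some_injective _ <| by
    rw [← daggerSucc_some_coe, ← daggerSucc_some_coe, h]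

lemma roots_daggerSucc (r : {i // i ≠ n} → Option (Fin N)) :
    roots (daggerSucc r) = {none, some n} := by
  ext v
  rcases v with _ | i
  · simp [roots]
  · by_cases hi : i = n
    · simp [roots, hi]
    · simp [roots, daggerSucc, hi]

lemma mem_range_daggerSucc {F : Option (Fin N) → Option (Option (Fin N))}
    (hF : roots F = {none, some n}) : F ∈ Set.range (daggerSucc (n := n)) := by
  have hroot : ∀ v, F v = none ↔ v = none ∨ v = some n := fun v => by
    simpa [roots] using Finset.ext_iff.mp hF v
  refine ⟨fun i => (F (some i)).getD none, funext fun v => ?_⟩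
  rcases v with _ | i
  · exact ((hroot none).mpr (.inl rfl)).symm
  · by_cases hi : i = n
    · subst hi
      simpa using ((hroot _).mpr (.inr rfl)).symm
    · obtain ⟨w, hw⟩ : ∃ w, F (some i) = some w :=
        Option.ne_none_iff_exists'.mp fun h => hi (by simpa [hroot] using h)
      simp [daggerSucc, hi, hw]

lemma reach_daggerSucc_iff (r : {i // i ≠ n} → Option (Fin N)) {m : Fin N} (hm : m ≠ n) :
    Reach (daggerSucc r) (some m) (some n) ↔
      ∃ z, Reach (innerSucc r) ⟨m, hm⟩ z ∧ r z = some n := by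
  have := (extendsByRoots_daggerSucc r).reach_iff (a := ⟨m, hm⟩) (y := some n)
    (fun i j h => Subtype.ext (Option.some_injective _ h)) (by simp)
  simpa [FStep] using this

lemma forestProd_daggerSucc {R : Type*} [CommRing R] (G : Matrix (Fin N) (Fin N) R)
    (r : {i // i ≠ n} → Option (Fin N)) :
    forestProd (daggerWeight G) (daggerSucc r) =
      ∏ i : {i // i ≠ n}, daggerWeight G (some (i : Fin N)) (r i) := by
  rw [forestProd, Fintype.prod_option, Fintype.prod_eq_mul_prod_subtype_ne _ n]
  simp

end DaggerGraph

section ChoiceExpansion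

variable {R : Type*} [CommRing R] {N : ℕ} {n : Fin N}

@[simp] lemma daggerWeight_some_some (G : Matrix (Fin N) (Fin N) R) (i j : Fin N) :
    daggerWeight G (some i) (some j) = if i = j then 0 else G i j :=
  rfl

@[simp] lemma daggerWeight_some_none (G : Matrix (Fin N) (Fin N) R) (i : Fin N) :
    daggerWeight G (some i) none = -∑ j, G i j :=
  rfl

lemma sum_daggerWeight_some (G : Matrix (Fin N) (Fin N) R) (i : Fin N) :
    ∑ k, daggerWeight G (some i) k = -G i i := by
  have hoff : ∀ j, daggerWeight G (some i) (some j) = G i j - if i = j then G i j else 0 :=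
    fun j => by by_cases h : i = j <;> simp [h]
  simp only [Fintype.sum_option, daggerWeight_some_none, hoff, Finset.sum_sub_distrib,
    Finset.sum_ite_eq, Finset.mem_univ, if_true]
  ring

variable (R) in
def choiceRow (m : Fin N) (i : {i // i ≠ n}) (k : Option (Fin N)) (j : {i // i ≠ n}) : R :=
  if (j : Fin N) = m then (if k = some n then 1 else 0)
  else (if i = j then 1 else 0) - (if k = some (j : Fin N) then 1 else 0)

lemma sum_daggerWeight_mul_choiceRow (G : Matrix (Fin N) (Fin N) R) (m : Fin N)
    (i j : {i // i ≠ n}) :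
    ∑ k, daggerWeight G (some (i : Fin N)) k * choiceRow R m i k j =
      if (j : Fin N) = m then G i n else -G i j := by
  by_cases hjm : (j : Fin N) = m
  · simp [choiceRow, hjm, i.2]
  · have hrow : ∀ k, choiceRow R m i k j =
        (if i = j then 1 else 0) - if k = some (j : Fin N) then 1 else 0 := fun k => if_neg hjm
    simp only [hrow, if_neg hjm, mul_sub, mul_ite, mul_one, mul_zero, Finset.sum_sub_distrib,
      Finset.sum_ite_eq', Finset.mem_univ, if_true, daggerWeight_some_some]
    by_cases hij : i = j
    · subst hij
      simp only [if_true]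
      rw [sum_daggerWeight_some]
      simp
    · simp [hij, Subtype.coe_ne_coe.mpr hij]

lemma of_choiceRow_eq {m : Fin N} (hm : m ≠ n) (r : {i // i ≠ n} → Option (Fin N)) :
    of (fun i j => choiceRow R m i (r i) j) =
      (1 - arcMatrix R (innerSucc r)).updateCol ⟨m, hm⟩
        (fun i => if r i = some n then 1 else 0) := by
  ext i j
  by_cases hj : j = ⟨m, hm⟩
  · simp [choiceRow, hj]
  · have hj' : (j : Fin N) ≠ m := fun h => hj (Subtype.ext h)
    simp [choiceRow, arcMatrix, innerSucc_eq_some_iff, one_apply, hj, hj', Subtype.ext_iff]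

lemma det_choiceRow [IsDomain R] {m : Fin N} (hm : m ≠ n)
    (r : {i // i ≠ n} → Option (Fin N)) :
    (of fun i j => choiceRow R m i (r i) j).det =
      if IsForest (innerSucc r) ∧ ∃ z, Reach (innerSucc r) ⟨m, hm⟩ z ∧ r z = some n then 1
      else 0 := by
  rw [of_choiceRow_eq hm, det_updateCol_one_sub_arcMatrix]
  intro i hi
  simp [innerSucc, hi]

end ChoiceExpansion

/-- det Δ'_nm = Σ_{F ∈ F_{†,n}(m·n)} π_F, where Δ'_nm is obtained from -G by
deleting row n and column n and replacing the m-th column by the negative of the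
n-th column of -G. -/
theorem stmt7 {N : ℕ} (G : Matrix (Fin N) (Fin N) ℂ) (n m : Fin N) (hnm : n ≠ m) :
    (Matrix.of fun i j : {i : Fin N // i ≠ n} =>
        if (j : Fin N) = m then G i n else -G i j).det =
      ∑ᶠ f ∈ {f : Option (Fin N) → Option (Option (Fin N)) |
          IsForest f ∧ f none = none ∧ roots f = {none, some n} ∧
            Reach f (some m) (some n)},
        forestProd (daggerWeight G) f := by
  have hm : m ≠ n := hnm.symm
  simp_rw [← sum_daggerWeight_mul_choiceRow, det_of_sum_mul, det_choiceRow hm, mul_ite, mul_one,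
    mul_zero, ← forestProd_daggerSucc]
  refine Eq.trans (Finset.sum_congr rfl fun r _ => ?_)
    (Fintype.sum_ite_mem_eq_finsum_mem daggerSucc_injective
      (fun F hF => mem_range_daggerSucc hF.2.2.1) _)
  simp only [Set.mem_ofPred_eq, (extendsByRoots_daggerSucc r).isForest_iff, daggerSucc_none,
    roots_daggerSucc, reach_daggerSucc_iff r hm, true_and]
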